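/- Let n ≥ 1, z ∈ ℂ∖ℝ, and let Ω ⊆ ℂ be open with z ∈ Ω and conj(z) ∈ Ω. Let ψ : ℝ³ × Ω → Mₙ(ℂ) be pointwise invertible, continuously differentiable in (x,u,v), holomorphic in λ ∈ Ω, and satisfy the reality condition ψ(p, conj(λ))* ψ(p, λ) = I whenever λ and conj(λ) lie in Ω. Let A, B : ℝ³ → Mₙ(ℂ) satisfy λ∂_xψ − ∂_uψ = Aψ and λ∂_vψ − ∂_xψ = Bψ for all λ ∈ Ω. Let π : ℝ³ → Mₙ(ℂ) be a continuously differentiable family of Hermitian projections for which there exist A₀, B₀ : ℝ³ → Mₙ(ℂ) with λ∂_x g_{z,π(p)}(λ) − ∂_u g_{z,π(p)}(λ) = A₀(p)·g_{z,π(p)}(λ) and λ∂_v g_{z,π(p)}(λ) − ∂_x g_{z,π(p)}(λ) = B₀(p)·g_{z,π(p)}(λ) for all λ ∈ ℂ∖{z}. Let π̃ : ℝ³ → Mₙ(ℂ) be a continuously differentiable family of Hermitian projections such that for every p the range of π̃(p) is the image of the range of π(p) under ψ(p, z). Then ψ₁(p, λ) := g_{z,π̃(p)}(λ)·ψ(p,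 λ) satisfies λ∂_xψ₁ − ∂_uψ₁ = (A + (conj(z) − z)∂_xπ̃)·ψ₁ and λ∂_vψ₁ − ∂_xψ₁ = (B + (conj(z) − z)∂_vπ̃)·ψ₁ for all λ ∈ Ω∖{z}. -/

import Mathlib

open Matrix Complex Filter

noncomputable section

/-- A Hermitian projection of ℂⁿ: a matrix with π* = π and π² = π. -/
def IsHermitianProj {n : ℕ} (π : Matrix (Fin n) (Fin n) ℂ) : Prop :=
  πᴴ = π ∧ π * π = π

/-- The simple element g_{z,π}(λ) = I + ((z - conj z)/(λ - z))·(I - π). -/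
def simpleElt {n : ℕ} (z : ℂ) (π : Matrix (Fin n) (Fin n) ℂ) (lam : ℂ) :
    Matrix (Fin n) (Fin n) ℂ :=
  1 + ((z - (starRingEnd ℂ) z) / (lam - z)) • (1 - π)

/-- The range of the linear map defined by a matrix. -/
def mrange {n m : ℕ} (A : Matrix (Fin n) (Fin m) ℂ) :
    Submodule ℂ (EuclideanSpace ℂ (Fin n)) :=
  LinearMap.range (Matrix.toEuclideanLin A)

/-- Entrywise partial derivative ∂_x of a matrix-valued map on ℝ³, p = (x,u,v). -/
def pdx {m k : Type*} (F : ℝ × ℝ × ℝ → Matrix m k ℂ) (p : ℝ × ℝ × ℝ) : Matrix m k ℂ :=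
  fun i j => deriv (fun s => F (s, p.2.1, p.2.2) i j) p.1

/-- Entrywise partial derivative ∂_u of a matrix-valued map on ℝ³, p = (x,u,v). -/
def pdu {m k : Type*} (F : ℝ × ℝ × ℝ → Matrix m k ℂ) (p : ℝ × ℝ × ℝ) : Matrix m k ℂ :=
  fun i j => deriv (fun s => F (p.1, s, p.2.2) i j) p.2.1

/-- Entrywise partial derivative ∂_v of a matrix-valued map on ℝ³, p = (x,u,v). -/
def pdv {m k : Type*} (F : ℝ × ℝ × ℝ → Matrix m k ℂ) (p : ℝ × ℝ × ℝ) : Matrix m k ℂ :=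
  fun i j => deriv (fun s => F (p.1, p.2.1, s) i j) p.2.2

/-!
Write `L_μ = μ ∂₁ - ∂₂` with `(∂₁, ∂₂) = (∂_x, ∂_u)` or `(∂_v, ∂_x)`. At a fixed point `L_μ` is
a derivation, so `L_λ(g̃ ψ) = (L_λ g̃) ψ + g̃ A ψ` with `L_λ g̃ = -c L_λ π̃`,
`c = (z - z̄)/(λ - z)`, and the claim reduces to the pointwise identity
`(L_z π̃) π̃ + (L_z̄ π̃)(1 - π̃) = A π̃ - π̃ A`.

Evaluating the soliton equation of `g_{z,π}` at `μ = z̄` and `μ = 2z - z̄`, where `g_{z,π}(μ)` is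
`π` and `2 - π`, gives `L_z π = (z - z̄) π ∂₁π`. Hence `F = ψ(·, z) π` satisfies
`L_z F = A F + (z - z̄) F ∂₁π`, and differentiating `π̃ F = F` shows that `L_z π̃ - (1 - π̃) A`
kills the range of `F`, which is the range of `π̃`: this is the first half of the identity.
Differentiating the reality condition `ψ(·, z̄)ᴴ ψ(·, z) = 1` gives `Aᴴ = -A`, and then the
conjugate transpose of the first half is the second half.
-/

open ComplexConjugate

section Calculus

variable {E : Type*} [NormedAddCommGroup E] [NormedSpace ℝ E] {m : Type*}

def EntrywiseDifferentiableAt (F : E → Matrix m m ℂ) (p : E) : Prop :=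
  ∀ i j, DifferentiableAt ℝ (fun q => F q i j) p

theorem EntrywiseDifferentiableAt.mul [Fintype m] {F G : E → Matrix m m ℂ} {p : E}
    (hF : EntrywiseDifferentiableAt F p) (hG : EntrywiseDifferentiableAt G p) :
    EntrywiseDifferentiableAt (fun q => F q * G q) p := fun i j => by
  simp only [mul_apply]
  exact DifferentiableAt.fun_sum fun k _ => (hF i k).mul (hG k j)

theorem EntrywiseDifferentiableAt.conjTranspose {F : E → Matrix m m ℂ} {p : E}
    (hF : EntrywiseDifferentiableAt F p) :
    EntrywiseDifferentiableAt (fun q => (F q)ᴴ) p := fun i j => (hF j i).star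

theorem entrywiseDifferentiableAt_of_contDiff {F : E → Matrix m m ℂ}
    (hF : ∀ i j, ContDiff ℝ 1 fun q => F q i j) (p : E) : EntrywiseDifferentiableAt F p :=
  fun i j => (hF i j).differentiable one_ne_zero p

variable [Fintype m]

structure IsMatrixDerivationAt (D : (E → Matrix m m ℂ) → Matrix m m ℂ) (p : E) : Prop where
  map_mul {F G : E → Matrix m m ℂ} : EntrywiseDifferentiableAt F p →
    EntrywiseDifferentiableAt G p → D (fun q => F q * G q) = D F * G p + F p * D G
  map_const_add_smul (C : Matrix m m ℂ) (a : ℂ) (F : E → Matrix m m ℂ) :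
    D (fun q => C + a • F q) = a • D F

structure IsMatrixStarDerivationAt (D : (E → Matrix m m ℂ) → Matrix m m ℂ) (p : E) : Prop
    extends IsMatrixDerivationAt D p where
  map_conjTranspose (F : E → Matrix m m ℂ) : D (fun q => (F q)ᴴ) = (D F)ᴴ

namespace IsMatrixDerivationAt

variable {D : (E → Matrix m m ℂ) → Matrix m m ℂ} {p : E}

theorem map_const (hD : IsMatrixDerivationAt D p) (C : Matrix m m ℂ) : D (fun _ => C) = 0 := by
  simpa using hD.map_const_add_smul C 0 fun _ => C

theorem map_idempotent (hD : IsMatrixDerivationAt D p) {P : E → Matrix m m ℂ}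
    (hPd : EntrywiseDifferentiableAt P p) (hP : ∀ q, P q * P q = P q) :
    D P * P p + P p * D P = D P := by
  rw [← hD.map_mul hPd hPd]
  simp only [hP]

end IsMatrixDerivationAt

def curveDeriv {k : Type*} (γ : ℝ → E) (t : ℝ) (F : E → Matrix m k ℂ) : Matrix m k ℂ :=
  fun i j => deriv (fun s => F (γ s) i j) t

theorem isMatrixStarDerivationAt_curveDeriv {γ : ℝ → E} {t : ℝ}
    (hγ : DifferentiableAt ℝ γ t) : IsMatrixStarDerivationAt (curveDeriv (m := m) γ t) (γ t) where
  map_mul {F G} hF hG := by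
    ext i j
    have hFγ : ∀ i j, DifferentiableAt ℝ (fun s => F (γ s) i j) t := fun i j => (hF i j).comp t hγ
    have hGγ : ∀ i j, DifferentiableAt ℝ (fun s => G (γ s) i j) t := fun i j => (hG i j).comp t hγ
    simp only [curveDeriv, mul_apply, Matrix.add_apply]
    calc deriv (fun s => ∑ k, F (γ s) i k * G (γ s) k j) t
        = ∑ k, deriv (fun s => F (γ s) i k * G (γ s) k j) t :=
          deriv_fun_sum fun k _ => (hFγ i k).mul (hGγ k j)
      _ = _ := by
          rw [← Finset.sum_add_distrib]
          exact Finset.sum_congr rfl fun k _ => deriv_fun_mul (hFγ i k) (hGγ k j)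
  map_const_add_smul C a F := by
    ext i j
    simp [curveDeriv, deriv_const_add, deriv_const_mul_field]
  map_conjTranspose F := by
    ext i j
    exact deriv.star

end Calculus

theorem isMatrixStarDerivationAt_pdx {n : ℕ} (p : ℝ × ℝ × ℝ) :
    IsMatrixStarDerivationAt (fun F : ℝ × ℝ × ℝ → Matrix (Fin n) (Fin n) ℂ => pdx F p) p :=
  isMatrixStarDerivationAt_curveDeriv (γ := fun s => (s, p.2.1, p.2.2)) (by fun_prop)

theorem isMatrixStarDerivationAt_pdu {n : ℕ} (p : ℝ × ℝ × ℝ) :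
    IsMatrixStarDerivationAt (fun F : ℝ × ℝ × ℝ → Matrix (Fin n) (Fin n) ℂ => pdu F p) p :=
  isMatrixStarDerivationAt_curveDeriv (γ := fun s => (p.1, s, p.2.2)) (by fun_prop)

theorem isMatrixStarDerivationAt_pdv {n : ℕ} (p : ℝ × ℝ × ℝ) :
    IsMatrixStarDerivationAt (fun F : ℝ × ℝ × ℝ → Matrix (Fin n) (Fin n) ℂ => pdv F p) p :=
  isMatrixStarDerivationAt_curveDeriv (γ := fun s => (p.1, p.2.1, s)) (by fun_prop)

section LaxDerivative

variable {E : Type*} {m : Type*} {D₁ D₂ : (E → Matrix m m ℂ) → Matrix m m ℂ}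

def laxDeriv (D₁ D₂ : (E → Matrix m m ℂ) → Matrix m m ℂ) (μ : ℂ) (F : E → Matrix m m ℂ) :
    Matrix m m ℂ :=
  μ • D₁ F - D₂ F

theorem laxDeriv_eq_add (μ ν : ℂ) (F : E → Matrix m m ℂ) :
    laxDeriv D₁ D₂ μ F = laxDeriv D₁ D₂ ν F + (μ - ν) • D₁ F := by
  simp only [laxDeriv, sub_smul]
  abel

variable [NormedAddCommGroup E] [NormedSpace ℝ E] [Fintype m] {p : E}

theorem IsMatrixDerivationAt.laxDeriv (h₁ : IsMatrixDerivationAt D₁ p)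
    (h₂ : IsMatrixDerivationAt D₂ p) (μ : ℂ) : IsMatrixDerivationAt (laxDeriv D₁ D₂ μ) p where
  map_mul hF hG := by
    simp only [_root_.laxDeriv, h₁.map_mul hF hG, h₂.map_mul hF hG, Matrix.sub_mul,
      Matrix.mul_sub, smul_mul_assoc, mul_smul_comm, smul_add]
    abel
  map_const_add_smul C a F := by
    simp only [_root_.laxDeriv, h₁.map_const_add_smul, h₂.map_const_add_smul, smul_sub,
      smul_comm μ a]

theorem laxDeriv_conjTranspose (h₁ : IsMatrixStarDerivationAt D₁ p)
    (h₂ : IsMatrixStarDerivationAt D₂ p) (μ : ℂ) (F : E → Matrix m m ℂ) :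
    laxDeriv D₁ D₂ μ (fun q => (F q)ᴴ) = (laxDeriv D₁ D₂ (conj μ) F)ᴴ := by
  simp [laxDeriv, h₁.map_conjTranspose, h₂.map_conjTranspose, conjTranspose_sub,
    conjTranspose_smul]

end LaxDerivative

section SimpleElement

variable {n : ℕ}

theorem simpleElt_eq_add_smul (z μ : ℂ) (P : Matrix (Fin n) (Fin n) ℂ) :
    simpleElt z P μ = (1 + ((z - conj z) / (μ - z)) • 1) + (-((z - conj z) / (μ - z))) • P := by
  rw [simpleElt, smul_sub, neg_smul, sub_eq_add_neg, add_assoc]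

theorem simpleElt_conj {z : ℂ} (hz : conj z ≠ z) (P : Matrix (Fin n) (Fin n) ℂ) :
    simpleElt z P (conj z) = P := by
  have : (z - conj z) / (conj z - z) = -1 := by
    rw [div_eq_iff (sub_ne_zero.2 hz)]
    ring
  rw [simpleElt, this, neg_one_smul]
  abel

theorem simpleElt_two_mul_sub_conj {z : ℂ} (hz : conj z ≠ z) (P : Matrix (Fin n) (Fin n) ℂ) :
    simpleElt z P (2 * z - conj z) = 1 + (1 - P) := by
  have : (z - conj z) / (2 * z - conj z - z) = 1 := by
    rw [show 2 * z - conj z - z = z - conj z by ring]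
    exact div_self (sub_ne_zero.2 hz.symm)
  rw [simpleElt, this, one_smul]

theorem neg_smul_add_simpleElt_mul {Z X₁ P A : Matrix (Fin n) (Fin n) ℂ} {z lam : ℂ}
    (hlam : lam ≠ z) (h : Z * P + (Z + (conj z - z) • X₁) * (1 - P) = A * P - P * A) :
    -((z - conj z) / (lam - z)) • (Z + (lam - z) • X₁) + simpleElt z P lam * A
      = (A + (conj z - z) • X₁) * simpleElt z P lam := by
  set c := (z - conj z) / (lam - z)
  have hX₁ : -c • (Z + (lam - z) • X₁) = -c • Z - (z - conj z) • X₁ := by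
    rw [smul_add, smul_smul, neg_mul, div_mul_cancel₀ _ (sub_ne_zero.2 hlam)]
    module
  rw [hX₁, simpleElt]
  linear_combination (norm := skip) (-c) • h
  simp only [Matrix.add_mul, Matrix.mul_add, Matrix.sub_mul, Matrix.mul_sub, Matrix.one_mul,
    Matrix.mul_one, smul_mul_assoc, mul_smul_comm]
  module

variable {E : Type*} [NormedAddCommGroup E] [NormedSpace ℝ E]

theorem EntrywiseDifferentiableAt.simpleElt {P : E → Matrix (Fin n) (Fin n) ℂ} {p : E}
    (hP : EntrywiseDifferentiableAt P p) (z μ : ℂ) :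
    EntrywiseDifferentiableAt (fun q => _root_.simpleElt z (P q) μ) p := fun i j => by
  simp only [_root_.simpleElt, Matrix.add_apply, Matrix.smul_apply, Matrix.sub_apply, smul_eq_mul]
  exact (((hP i j).const_sub _).const_mul _).const_add _

theorem IsMatrixDerivationAt.map_simpleElt
    {D : (E → Matrix (Fin n) (Fin n) ℂ) → Matrix (Fin n) (Fin n) ℂ} {p : E}
    (hD : IsMatrixDerivationAt D p) (z μ : ℂ) (P : E → Matrix (Fin n) (Fin n) ℂ) :
    D (fun q => simpleElt z (P q) μ) = -((z - conj z) / (μ - z)) • D P := by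
  simp only [simpleElt_eq_add_smul, hD.map_const_add_smul]

end SimpleElement

section Range

variable {n k : ℕ}

theorem mrange_mul (A : Matrix (Fin n) (Fin n) ℂ) (B : Matrix (Fin n) (Fin k) ℂ) :
    mrange (A * B) = (mrange B).map (toEuclideanLin A) := by
  rw [mrange, toLpLin_mul_same, LinearMap.range_comp]
  rfl

theorem mul_eq_self_of_mrange_le {P : Matrix (Fin n) (Fin n) ℂ} {F : Matrix (Fin n) (Fin k) ℂ}
    (hP : P * P = P) (h : mrange F ≤ mrange P) : P * F = F := by
  refine toEuclideanLin.injective (LinearMap.ext fun v => ?_)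
  obtain ⟨u, hu⟩ := h (LinearMap.mem_range_self _ v)
  rw [toLpLin_mul_same, LinearMap.comp_apply, ← hu, ← LinearMap.comp_apply, ← toLpLin_mul_same, hP]

theorem mul_eq_zero_of_mrange_le {P : Matrix (Fin n) (Fin k) ℂ} {F : Matrix (Fin n) (Fin n) ℂ}
    {X : Matrix (Fin n) (Fin n) ℂ} (h : mrange P ≤ mrange F) (hX : X * F = 0) : X * P = 0 := by
  refine toEuclideanLin.injective ?_
  rw [map_zero, toLpLin_mul_same, ← LinearMap.range_le_ker_iff]
  refine h.trans (LinearMap.range_le_ker_iff.2 ?_)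
  rw [← toLpLin_mul_same, hX, map_zero]

end Range

section MatrixAlgebra

variable {m : Type*} [Fintype m] [DecidableEq m]

-- `hw` and `hr` are a soliton equation at `μ = w` and `μ = 2z - w`, where `g_{z,P}(μ)` is `P` and
-- `2 - P` (for `w = z̄`).
theorem sub_eq_mul_smul_of_soliton {P X₁ X₂ A₀ : Matrix m m ℂ} {z w : ℂ}
    (hX₁ : X₁ * P + P * X₁ = X₁) (hw : w • X₁ - X₂ = A₀ * P)
    (hr : (2 * z - w) • X₁ - X₂ = -(A₀ * (1 + (1 - P)))) :
    z • X₁ - X₂ = P * ((z - w) • X₁) := by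
  have hA₀ : A₀ = (w - z) • X₁ := by
    apply smul_right_injective _ (two_ne_zero (α := ℂ))
    linear_combination (norm := skip) hr - hw
    simp only [Matrix.mul_add, Matrix.mul_sub, Matrix.mul_one]
    module
  rw [hA₀] at hw
  linear_combination (norm := skip) hw - (z - w) • hX₁
  simp only [smul_mul_assoc, mul_smul_comm]
  module

theorem mul_add_mul_one_sub_eq_commutator {Z W P A : Matrix m m ℂ}
    (hZ : (Z - (1 - P) * A) * P = 0) (hZW : Zᴴ = W) (hP : Pᴴ = P) (hA : Aᴴ = -A)
    (hW : W * P + P * W = W) :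
    Z * P + W * (1 - P) = A * P - P * A := by
  have hZ' := congrArg conjTranspose hZ
  simp only [conjTranspose_mul, conjTranspose_sub, conjTranspose_one, hZW, hP, hA,
    conjTranspose_zero] at hZ'
  linear_combination (norm := skip) hZ + hZ' - hW
  noncomm_ring

end MatrixAlgebra

section Dressing

variable {n : ℕ} {E : Type*} [NormedAddCommGroup E] [NormedSpace ℝ E]
  {D₁ D₂ : (E → Matrix (Fin n) (Fin n) ℂ) → Matrix (Fin n) (Fin n) ℂ} {p : E} {z : ℂ}

theorem laxDeriv_eq_of_soliton (h₁ : IsMatrixDerivationAt D₁ p) (h₂ : IsMatrixDerivationAt D₂ p)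
    (hz : conj z ≠ z) {π : E → Matrix (Fin n) (Fin n) ℂ} {A₀ : Matrix (Fin n) (Fin n) ℂ}
    (hπd : EntrywiseDifferentiableAt π p) (hπ : ∀ q, π q * π q = π q)
    (hsol : ∀ μ, μ ≠ z →
      laxDeriv D₁ D₂ μ (fun q => simpleElt z (π q) μ) = A₀ * simpleElt z (π p) μ) :
    laxDeriv D₁ D₂ z π = π p * ((z - conj z) • D₁ π) := by
  have hw : laxDeriv D₁ D₂ (conj z) π = A₀ * π p := by
    simpa only [simpleElt_conj hz] using hsol (conj z) hz
  have hr : laxDeriv D₁ D₂ (2 * z - conj z) π = -(A₀ * (1 + (1 - π p))) := by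
    have h := hsol (2 * z - conj z) fun h => hz (by linear_combination -h)
    simp only [simpleElt_two_mul_sub_conj hz] at h
    rw [← h, show (fun q => 1 + (1 - π q)) = fun q => (1 + 1) + (-1 : ℂ) • π q from
      funext fun q => by module, (h₁.laxDeriv h₂ _).map_const_add_smul, neg_one_smul, neg_neg]
  exact sub_eq_mul_smul_of_soliton (h₁.map_idempotent hπd hπ) hw hr

theorem IsMatrixDerivationAt.sub_mul_proj_eq_zero
    {δ : (E → Matrix (Fin n) (Fin n) ℂ) → Matrix (Fin n) (Fin n) ℂ}
    (hδ : IsMatrixDerivationAt δ p) {Ψ π πt : E → Matrix (Fin n) (Fin n) ℂ}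
    {A Y : Matrix (Fin n) (Fin n) ℂ} (hΨd : EntrywiseDifferentiableAt Ψ p)
    (hπd : EntrywiseDifferentiableAt π p) (hπtd : EntrywiseDifferentiableAt πt p)
    (hπt : ∀ q, πt q * πt q = πt q) (hrange : ∀ q, mrange (πt q) = mrange (Ψ q * π q))
    (hΨ : δ Ψ = A * Ψ p) (hπ : δ π = π p * Y) :
    (δ πt - (1 - πt p) * A) * πt p = 0 := by
  have hfix : ∀ q, πt q * (Ψ q * π q) = Ψ q * π q := fun q =>
    mul_eq_self_of_mrange_le (hπt q) (hrange q).ge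
  have hF : δ (fun q => Ψ q * π q) = A * (Ψ p * π p) + Ψ p * π p * Y := by
    rw [hδ.map_mul hΨd hπd, hΨ, hπ, Matrix.mul_assoc, Matrix.mul_assoc]
  have hLeib : δ πt * (Ψ p * π p) + πt p * δ (fun q => Ψ q * π q)
      = δ (fun q => Ψ q * π q) := by
    rw [← hδ.map_mul hπtd (hΨd.mul hπd)]
    simp only [hfix]
  refine mul_eq_zero_of_mrange_le (hrange p).le ?_
  rw [hF] at hLeib
  linear_combination (norm := skip) hLeib - hfix p * Y
  noncomm_ring

theorem conjTranspose_eq_neg_of_laxDeriv (h₁ : IsMatrixStarDerivationAt D₁ p)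
    (h₂ : IsMatrixStarDerivationAt D₂ p) {Ψz Ψw : E → Matrix (Fin n) (Fin n) ℂ}
    {A : Matrix (Fin n) (Fin n) ℂ} (hΨzd : EntrywiseDifferentiableAt Ψz p)
    (hΨwd : EntrywiseDifferentiableAt Ψw p) (hreal : ∀ q, (Ψw q)ᴴ * Ψz q = 1)
    (hΨz : laxDeriv D₁ D₂ z Ψz = A * Ψz p) (hΨw : laxDeriv D₁ D₂ (conj z) Ψw = A * Ψw p) :
    Aᴴ = -A := by
  have hδ := h₁.laxDeriv h₂.toIsMatrixDerivationAt z
  have h0 : (Ψw p)ᴴ * (Aᴴ + A) * Ψz p = 0 := by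
    have h := hδ.map_mul hΨwd.conjTranspose hΨzd
    simp only [hreal, hδ.map_const, laxDeriv_conjTranspose h₁ h₂, hΨw, hΨz,
      conjTranspose_mul] at h
    linear_combination (norm := skip) -h
    noncomm_ring
  have hinv : Ψz p * (Ψw p)ᴴ = 1 := mul_eq_one_comm.1 (hreal p)
  refine eq_neg_of_add_eq_zero_left ?_
  calc Aᴴ + A = Ψz p * ((Ψw p)ᴴ * (Aᴴ + A) * Ψz p) * (Ψw p)ᴴ := by
        simp only [← Matrix.mul_assoc, hinv, Matrix.one_mul]
        rw [Matrix.mul_assoc, hinv, Matrix.mul_one]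
    _ = 0 := by rw [h0, Matrix.mul_zero, Matrix.zero_mul]

theorem laxDeriv_simpleElt_mul (h₁ : IsMatrixStarDerivationAt D₁ p)
    (h₂ : IsMatrixStarDerivationAt D₂ p) (hz : conj z ≠ z) {lam : ℂ} (hlam : lam ≠ z)
    {A A₀ : Matrix (Fin n) (Fin n) ℂ} {Ψ Ψz Ψw π πt : E → Matrix (Fin n) (Fin n) ℂ}
    (hΨd : EntrywiseDifferentiableAt Ψ p) (hΨzd : EntrywiseDifferentiableAt Ψz p)
    (hΨwd : EntrywiseDifferentiableAt Ψw p) (hπd : EntrywiseDifferentiableAt π p)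
    (hπtd : EntrywiseDifferentiableAt πt p)
    (hΨ : laxDeriv D₁ D₂ lam Ψ = A * Ψ p) (hΨz : laxDeriv D₁ D₂ z Ψz = A * Ψz p)
    (hΨw : laxDeriv D₁ D₂ (conj z) Ψw = A * Ψw p) (hreal : ∀ q, (Ψw q)ᴴ * Ψz q = 1)
    (hπ : ∀ q, π q * π q = π q)
    (hsol : ∀ μ, μ ≠ z →
      laxDeriv D₁ D₂ μ (fun q => simpleElt z (π q) μ) = A₀ * simpleElt z (π p) μ)
    (hπt : ∀ q, IsHermitianProj (πt q)) (hrange : ∀ q, mrange (πt q) = mrange (Ψz q * π q)) :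
    laxDeriv D₁ D₂ lam (fun q => simpleElt z (πt q) lam * Ψ q)
      = (A + (conj z - z) • D₁ πt) * (simpleElt z (πt p) lam * Ψ p) := by
  have hL := h₁.laxDeriv h₂.toIsMatrixDerivationAt
  have hskew : Aᴴ = -A := conjTranspose_eq_neg_of_laxDeriv h₁ h₂ hΨzd hΨwd hreal hΨz hΨw
  have hZ : (laxDeriv D₁ D₂ z πt - (1 - πt p) * A) * πt p = 0 :=
    (hL z).sub_mul_proj_eq_zero hΨzd hπd hπtd (fun q => (hπt q).2) hrange hΨz
      (laxDeriv_eq_of_soliton h₁.toIsMatrixDerivationAt h₂.toIsMatrixDerivationAt hz hπd hπ hsol)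
  have hZW : (laxDeriv D₁ D₂ z πt)ᴴ = laxDeriv D₁ D₂ (conj z) πt := by
    rw [← conj_conj z, ← laxDeriv_conjTranspose h₁ h₂, conj_conj]
    simp only [fun q => (hπt q).1]
  have hcomm := mul_add_mul_one_sub_eq_commutator hZ hZW (hπt p).1 hskew
    ((hL (conj z)).map_idempotent hπtd fun q => (hπt q).2)
  rw [laxDeriv_eq_add (conj z) z πt] at hcomm
  calc laxDeriv D₁ D₂ lam (fun q => simpleElt z (πt q) lam * Ψ q)
      = (-((z - conj z) / (lam - z)) • laxDeriv D₁ D₂ lam πt + simpleElt z (πt p) lam * A)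
          * Ψ p := by
        rw [(hL lam).map_mul (hπtd.simpleElt z lam) hΨd, (hL lam).map_simpleElt, hΨ,
          Matrix.add_mul, Matrix.mul_assoc]
    _ = _ := by
        rw [laxDeriv_eq_add lam z πt, neg_smul_add_simpleElt_mul hlam hcomm, Matrix.mul_assoc]

end Dressing

theorem statement10_general {n : ℕ} (z : ℂ) (hz : z.im ≠ 0)
    (Ω : Set ℂ) (hzΩ : z ∈ Ω) (hzcΩ : (starRingEnd ℂ) z ∈ Ω)
    (ψ : ℝ × ℝ × ℝ → ℂ → Matrix (Fin n) (Fin n) ℂ)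
    (hC1 : ∀ lam ∈ Ω, ∀ i j, ContDiff ℝ 1 (fun p => ψ p lam i j))
    (hreal : ∀ p, ∀ lam ∈ Ω, (starRingEnd ℂ) lam ∈ Ω →
      (ψ p ((starRingEnd ℂ) lam))ᴴ * ψ p lam = 1)
    (A B : ℝ × ℝ × ℝ → Matrix (Fin n) (Fin n) ℂ)
    (hA : ∀ p, ∀ lam ∈ Ω,
      lam • pdx (fun q => ψ q lam) p - pdu (fun q => ψ q lam) p = A p * ψ p lam)
    (hB : ∀ p, ∀ lam ∈ Ω,
      lam • pdv (fun q => ψ q lam) p - pdx (fun q => ψ q lam) p = B p * ψ p lam)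
    (π : ℝ × ℝ × ℝ → Matrix (Fin n) (Fin n) ℂ)
    (hπ : ∀ p, IsHermitianProj (π p))
    (hπC1 : ∀ i j, ContDiff ℝ 1 (fun p => π p i j))
    (A₀ B₀ : ℝ × ℝ × ℝ → Matrix (Fin n) (Fin n) ℂ)
    (hA₀ : ∀ p lam, lam ≠ z →
      lam • pdx (fun q => simpleElt z (π q) lam) p - pdu (fun q => simpleElt z (π q) lam) p
        = A₀ p * simpleElt z (π p) lam)
    (hB₀ : ∀ p lam, lam ≠ z →
      lam • pdv (fun q => simpleElt z (π q) lam) p - pdx (fun q => simpleElt z (π q) lam) p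
        = B₀ p * simpleElt z (π p) lam)
    (πt : ℝ × ℝ × ℝ → Matrix (Fin n) (Fin n) ℂ)
    (hπt : ∀ p, IsHermitianProj (πt p))
    (hπtC1 : ∀ i j, ContDiff ℝ 1 (fun p => πt p i j))
    (hπtr : ∀ p, mrange (πt p) = (mrange (π p)).map (Matrix.toEuclideanLin (ψ p z))) :
    ∀ p, ∀ lam ∈ Ω, lam ≠ z →
      (lam • pdx (fun q => simpleElt z (πt q) lam * ψ q lam) p
          - pdu (fun q => simpleElt z (πt q) lam * ψ q lam) p
        = (A p + ((starRingEnd ℂ) z - z) • pdx πt p)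
            * (simpleElt z (πt p) lam * ψ p lam)) ∧
      (lam • pdv (fun q => simpleElt z (πt q) lam * ψ q lam) p
          - pdx (fun q => simpleElt z (πt q) lam * ψ q lam) p
        = (B p + ((starRingEnd ℂ) z - z) • pdv πt p)
            * (simpleElt z (πt p) lam * ψ p lam)) := by
  intro p lam hlam hne
  have hz' : conj z ≠ z := fun h => hz (conj_eq_iff_im.1 h)
  have hψd : ∀ μ ∈ Ω, EntrywiseDifferentiableAt (fun q => ψ q μ) p := fun μ hμ =>
    entrywiseDifferentiableAt_of_contDiff (hC1 μ hμ) p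
  have hπd := entrywiseDifferentiableAt_of_contDiff hπC1 p
  have hπtd := entrywiseDifferentiableAt_of_contDiff hπtC1 p
  have hrange : ∀ q, mrange (πt q) = mrange (ψ q z * π q) := fun q => by rw [mrange_mul, hπtr]
  have hψz : ∀ q, (ψ q (conj z))ᴴ * ψ q z = 1 := fun q => hreal q z hzΩ hzcΩ
  have hπ2 : ∀ q, π q * π q = π q := fun q => (hπ q).2
  exact ⟨laxDeriv_simpleElt_mul (isMatrixStarDerivationAt_pdx p) (isMatrixStarDerivationAt_pdu p)
      hz' hne (hψd lam hlam) (hψd z hzΩ) (hψd _ hzcΩ) hπd hπtd (hA p lam hlam) (hA p z hzΩ)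
      (hA p _ hzcΩ) hψz hπ2 (hA₀ p) hπt hrange,
    laxDeriv_simpleElt_mul (isMatrixStarDerivationAt_pdv p) (isMatrixStarDerivationAt_pdx p)
      hz' hne (hψd lam hlam) (hψd z hzΩ) (hψd _ hzcΩ) hπd hπtd (hB p lam hlam) (hB p z hzΩ)
      (hB p _ hzcΩ) hψz hπ2 (hB₀ p) hπt hrange⟩

/-- Algebraic Bäcklund transformation (Theorem 3.1(2)): if ψ is an extended solution with
λψ_x − ψ_u = Aψ, λψ_v − ψ_x = Bψ, g_{z,π} is an extended 1-soliton, and π̃(p) is the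
Hermitian projection onto ψ(p,z)(range π(p)), then ψ₁ = g_{z,π̃}ψ satisfies the linear
system with coefficients (A + (conj z − z)∂_xπ̃, B + (conj z − z)∂_vπ̃). -/
theorem statement10 {n : ℕ} (hn : 1 ≤ n) (z : ℂ) (hz : z.im ≠ 0)
    (Ω : Set ℂ) (hΩ : IsOpen Ω) (hzΩ : z ∈ Ω) (hzcΩ : (starRingEnd ℂ) z ∈ Ω)
    (ψ : ℝ × ℝ × ℝ → ℂ → Matrix (Fin n) (Fin n) ℂ)
    (hinv : ∀ p, ∀ lam ∈ Ω, IsUnit (ψ p lam))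
    (hC1 : ∀ lam ∈ Ω, ∀ i j, ContDiff ℝ 1 (fun p => ψ p lam i j))
    (hhol : ∀ p i j, DifferentiableOn ℂ (fun lam => ψ p lam i j) Ω)
    (hreal : ∀ p, ∀ lam ∈ Ω, (starRingEnd ℂ) lam ∈ Ω →
      (ψ p ((starRingEnd ℂ) lam))ᴴ * ψ p lam = 1)
    (A B : ℝ × ℝ × ℝ → Matrix (Fin n) (Fin n) ℂ)
    (hA : ∀ p, ∀ lam ∈ Ω,
      lam • pdx (fun q => ψ q lam) p - pdu (fun q => ψ q lam) p = A p * ψ p lam)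
    (hB : ∀ p, ∀ lam ∈ Ω,
      lam • pdv (fun q => ψ q lam) p - pdx (fun q => ψ q lam) p = B p * ψ p lam)
    (π : ℝ × ℝ × ℝ → Matrix (Fin n) (Fin n) ℂ)
    (hπ : ∀ p, IsHermitianProj (π p))
    (hπC1 : ∀ i j, ContDiff ℝ 1 (fun p => π p i j))
    (A₀ B₀ : ℝ × ℝ × ℝ → Matrix (Fin n) (Fin n) ℂ)
    (hA₀ : ∀ p lam, lam ≠ z →
      lam • pdx (fun q => simpleElt z (π q) lam) p - pdu (fun q => simpleElt z (π q) lam) p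
        = A₀ p * simpleElt z (π p) lam)
    (hB₀ : ∀ p lam, lam ≠ z →
      lam • pdv (fun q => simpleElt z (π q) lam) p - pdx (fun q => simpleElt z (π q) lam) p
        = B₀ p * simpleElt z (π p) lam)
    (πt : ℝ × ℝ × ℝ → Matrix (Fin n) (Fin n) ℂ)
    (hπt : ∀ p, IsHermitianProj (πt p))
    (hπtC1 : ∀ i j, ContDiff ℝ 1 (fun p => πt p i j))
    (hπtr : ∀ p, mrange (πt p) = (mrange (π p)).map (Matrix.toEuclideanLin (ψ p z))) :
    ∀ p, ∀ lam ∈ Ω, lam ≠ z →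
      (lam • pdx (fun q => simpleElt z (πt q) lam * ψ q lam) p
          - pdu (fun q => simpleElt z (πt q) lam * ψ q lam) p
        = (A p + ((starRingEnd ℂ) z - z) • pdx πt p)
            * (simpleElt z (πt p) lam * ψ p lam)) ∧
      (lam • pdv (fun q => simpleElt z (πt q) lam * ψ q lam) p
          - pdx (fun q => simpleElt z (πt q) lam * ψ q lam) p
        = (B p + ((starRingEnd ℂ) z - z) • pdv πt p)
            * (simpleElt z (πt p) lam * ψ p lam)) :=
  statement10_general z hz Ω hzΩ hzcΩ ψ hC1 hreal A B hA hB π hπ hπC1 A₀ B₀ hA₀ hB₀ πt hπt hπtC1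
    hπtr
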